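/- arXiv:2004.00744 — 2 statements merged into one kernel-verified Lean document; each statement's English description precedes it below -/
import Mathlib

section
/- Let G be a regular pattern graph on a pattern set 𝓡, let p be a joint pmf satisfying marginal positivity whose selection odds model factorizes with respect to G, and let θ : ((j : Fin d) → X_j) → ℝ. Then the mean parameter decomposes over paths: Σ_ℓ θ(ℓ) · p(ℓ, 𝓡) = Σ_{r ∈ 𝓡} Σ_{Ξ ∈ Π_r} Σ_ℓ θ(ℓ) · p(ℓ, 1_d) · ∏_{s ∈ Ξ, s ≠ 1_d} O_s(ℓ); i.e. E[θ(L)] = θ_{1_d} + Σ_{r ≠ 1_d} Σ_{Ξ ∈ Π_r} θ_Ξ, where θ_Ξ = Σ_ℓ θ(ℓ) · p(ℓ, 1_d) · ∏_{s ∈ Ξ, s ≠ 1_d} O_s(ℓ) and θ_{1_d} = Σ_ℓ θ(ℓ) · p(ℓ, 1_d). -/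
open Finset

noncomputable section

/-- Response patterns: binary vectors of length `d`, ordered pointwise (`false < true`). -/
abbrev Pat (d : ℕ) := Fin d → Bool

/-- The all-true (fully observed) pattern `1_d`. -/
def allOnes (d : ℕ) : Pat d := fun _ => true

variable {d : ℕ}


instance (r s : Pat d) : Decidable (r ≤ s) :=
  decidable_of_iff (∀ j, r j ≤ s j) (by simp [Pi.le_def])

instance (r s : Pat d) : Decidable (r < s) :=
  decidable_of_iff (r ≤ s ∧ ¬ s ≤ r) lt_iff_le_not_ge.symm

/-- Two full-data values have the same observed part under pattern `r`. -/
def agree {X : Fin d → Type*} (r : Pat d) (ℓ ℓ' : ∀ j, X j) : Prop :=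
  ∀ j, r j = true → ℓ j = ℓ' j

instance {X : Fin d → Type*} [∀ j, DecidableEq (X j)] (r : Pat d) (ℓ ℓ' : ∀ j, X j) :
    Decidable (agree r ℓ ℓ') := by
  unfold agree; infer_instance

variable {X : Fin d → Type*} [∀ j, Fintype (X j)] [∀ j, DecidableEq (X j)]

/-- `p(ℓ, A) = Σ_{s ∈ A} p(ℓ, s)`. -/
def jointA (p : (∀ j, X j) → Pat d → ℝ) (ℓ : ∀ j, X j) (A : Finset (Pat d)) : ℝ :=
  ∑ s ∈ A, p ℓ s

/-- `p_r(ℓ, s) = Σ_{ℓ' ~_r ℓ} p(ℓ', s)` : observed-data mass under pattern `r`. -/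
def obsP (p : (∀ j, X j) → Pat d → ℝ) (r : Pat d) (ℓ : ∀ j, X j) (s : Pat d) : ℝ :=
  ∑ ℓ' ∈ univ.filter (fun ℓ' => agree r ℓ ℓ'), p ℓ' s

/-- `p_r(ℓ, A) = Σ_{s ∈ A} p_r(ℓ, s)`. -/
def obsPA (p : (∀ j, X j) → Pat d → ℝ) (r : Pat d) (ℓ : ∀ j, X j) (A : Finset (Pat d)) : ℝ :=
  ∑ s ∈ A, obsP p r ℓ s

/-- `p` is a joint pmf on (full data) × (pattern set `𝓡`): nonnegative with total sum 1. -/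
def IsJointPMF (𝓡 : Finset (Pat d)) (p : (∀ j, X j) → Pat d → ℝ) : Prop :=
  (∀ ℓ, ∀ r ∈ 𝓡, 0 ≤ p ℓ r) ∧ (∑ ℓ : ∀ j, X j, ∑ r ∈ 𝓡, p ℓ r) = 1

/-- Marginal positivity: `p_r(ℓ, r) > 0` for every `ℓ` and every `r ∈ 𝓡`. -/
def MargPos (𝓡 : Finset (Pat d)) (p : (∀ j, X j) → Pat d → ℝ) : Prop :=
  ∀ ℓ, ∀ r ∈ 𝓡, 0 < obsP p r ℓ r

/-- Full positivity: `p(ℓ, r) > 0` for every `ℓ` and every `r ∈ 𝓡`. -/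
def FullPos (𝓡 : Finset (Pat d)) (p : (∀ j, X j) → Pat d → ℝ) : Prop :=
  ∀ ℓ, ∀ r ∈ 𝓡, 0 < p ℓ r

/-- Selection odds `O_r(ℓ) = p_r(ℓ, r) / p_r(ℓ, PA(r))`. -/
def odds (p : (∀ j, X j) → Pat d → ℝ) (PA : Pat d → Finset (Pat d)) (r : Pat d)
    (ℓ : ∀ j, X j) : ℝ :=
  obsP p r ℓ r / obsPA p r ℓ (PA r)

/-- A regular pattern graph on `𝓡`: `1_d` is a source, and every other pattern in `𝓡`
has a nonempty parent set inside `𝓡` consisting of strictly larger patterns. -/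
def IsRegularGraph (𝓡 : Finset (Pat d)) (PA : Pat d → Finset (Pat d)) : Prop :=
  PA (allOnes d) = ∅ ∧
    ∀ r ∈ 𝓡, r ≠ allOnes d → (PA r).Nonempty ∧ PA r ⊆ 𝓡 ∧ ∀ s ∈ PA r, r < s

/-- The selection odds model of `p` factorizes with respect to the pattern graph. -/
def SelOddsFactorizes (𝓡 : Finset (Pat d)) (PA : Pat d → Finset (Pat d))
    (p : (∀ j, X j) → Pat d → ℝ) : Prop :=
  ∀ r ∈ 𝓡, r ≠ allOnes d → ∀ ℓ, p ℓ r = jointA p ℓ (PA r) * odds p PA r ℓ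

/-- The pattern mixture model of `p` factorizes with respect to the pattern graph. -/
def PMMFactorizes (𝓡 : Finset (Pat d)) (PA : Pat d → Finset (Pat d))
    (p : (∀ j, X j) → Pat d → ℝ) : Prop :=
  ∀ r ∈ 𝓡, r ≠ allOnes d → ∀ ℓ,
    p ℓ r * obsPA p r ℓ (PA r) = jointA p ℓ (PA r) * obsP p r ℓ r

/-- A path from `u` to `v` in the pattern graph: a nonempty sequence
`u = r_0, r_1, …, r_m = v` of patterns in `𝓡` with `r_i ∈ PA(r_{i+1})`. -/
def IsPath (𝓡 : Finset (Pat d)) (PA : Pat d → Finset (Pat d)) (u v : Pat d)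
    (Ξ : List (Pat d)) : Prop :=
  Ξ ≠ [] ∧ Ξ.head? = some u ∧ Ξ.getLast? = some v ∧ (∀ q ∈ Ξ, q ∈ 𝓡) ∧
    Ξ.Chain' (fun a b => a ∈ PA b)

/-! Because parents are strictly larger patterns, the pattern graph is acyclic, so the
recursion `p(ℓ, r) = p(ℓ, PA(r)) · O_r(ℓ)` can be unfolded by well-founded induction down to
`1_d`: each unfolding step extends every path into a parent by one edge, and `p(ℓ, r)` becomes
the sum over paths `Ξ ∈ Π_r` of `p(ℓ, 1_d) · ∏_{s ∈ Ξ, s ≠ 1_d} O_s(ℓ)`. Multiplying by `θ(ℓ)`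
and summing over `ℓ` and `r ∈ 𝓡` gives the decomposition. -/

section PathWeight

variable {R : Type*} [CommMonoid R] (w : Pat d → R)

def pathWeight (Ξ : List (Pat d)) : R :=
  (Ξ.map fun s => if s = allOnes d then 1 else w s).prod

theorem pathWeight_singleton_allOnes : pathWeight w [allOnes d] = 1 := by
  simp [pathWeight]

theorem pathWeight_append_singleton (Ξ : List (Pat d)) {r : Pat d} (hr : r ≠ allOnes d) :
    pathWeight w (Ξ ++ [r]) = pathWeight w Ξ * w r := by
  simp [pathWeight, hr]

end PathWeight

section Paths

variable {𝓡 : Finset (Pat d)} {PA : Pat d → Finset (Pat d)} {u v s : Pat d}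
  {Ξ : List (Pat d)}

theorem IsPath.singleton (hu : u ∈ 𝓡) : IsPath 𝓡 PA u u [u] :=
  ⟨List.cons_ne_nil _ _, rfl, rfl, by simpa using hu, List.isChain_singleton _⟩

theorem IsPath.append_singleton (hp : IsPath 𝓡 PA u s Ξ) (hs : s ∈ PA v) (hv : v ∈ 𝓡) :
    IsPath 𝓡 PA u v (Ξ ++ [v]) := by
  obtain ⟨hne, hhead, hlast, hmem, hchain⟩ := hp
  refine ⟨by simp, by rwa [List.head?_append_of_ne_nil _ hne], List.getLast?_concat, ?_,
    List.isChain_append.2 ⟨hchain, List.isChain_singleton _, ?_⟩⟩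
  · simpa [or_imp, forall_and] using ⟨hmem, hv⟩
  · simp [hlast, hs]

theorem IsPath.exists_eq_append_singleton (hp : IsPath 𝓡 PA u v Ξ) (hvu : v ≠ u) :
    ∃ Ξ' s, Ξ = Ξ' ++ [v] ∧ s ∈ PA v ∧ IsPath 𝓡 PA u s Ξ' := by
  obtain ⟨hne, hhead, hlast, hmem, hchain⟩ := hp
  obtain ⟨Ξ', a, rfl⟩ := List.eq_nil_or_concat' Ξ |>.resolve_left hne
  obtain rfl : a = v := by simpa using hlast
  have hne' : Ξ' ≠ [] := by
    rintro rfl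
    exact hvu (by simpa using hhead)
  obtain ⟨hchain', -, hstep⟩ := List.isChain_append.1 hchain
  have hlast' := List.getLast?_eq_some_getLast hne'
  refine ⟨Ξ', Ξ'.getLast hne', rfl, hstep _ hlast' _ rfl, hne', ?_, hlast',
    fun q hq => hmem q (List.mem_append_left _ hq), hchain'⟩
  rwa [List.head?_append_of_ne_nil _ hne'] at hhead

theorem IsPath.isChain_gt (hG : IsRegularGraph 𝓡 PA) (hp : IsPath 𝓡 PA u v Ξ) :
    Ξ.IsChain (· > ·) :=
  List.IsChain.imp_of_mem_imp (fun a b _ hb hab =>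
    (hG.2 b (hp.2.2.2.1 b hb) (by rintro rfl; simp [hG.1] at hab)).2.2 a hab) hp.2.2.2.2

theorem IsPath.eq_singleton (hG : IsRegularGraph 𝓡 PA) (hp : IsPath 𝓡 PA u u Ξ) :
    Ξ = [u] := by
  have hpw := (hp.isChain_gt hG).pairwise
  obtain ⟨hne, hhead, hlast, -, -⟩ := hp
  match Ξ, hne, hhead, hlast, hpw with
  | [a], _, hhead, _, _ => simpa using hhead
  | a :: b :: t, _, hhead, hlast, hpw =>
    obtain rfl : a = u := by simpa using hhead
    have hmem : (b :: t).getLast (List.cons_ne_nil _ _) ∈ b :: t := List.getLast_mem _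
    rw [List.getLast?_eq_some_getLast (List.cons_ne_nil _ _),
      List.getLast_cons (List.cons_ne_nil _ _), Option.some_inj] at hlast
    exact absurd (List.rel_of_pairwise_cons hpw hmem) (by rw [hlast]; exact lt_irrefl a)

variable {Paths : Pat d → Finset (List (Pat d))}

theorem paths_self_eq_singleton (hG : IsRegularGraph 𝓡 PA) (hu : u ∈ 𝓡)
    (hPaths : ∀ r Ξ, Ξ ∈ Paths r ↔ IsPath 𝓡 PA u r Ξ) : Paths u = {[u]} := by
  ext Ξ
  rw [hPaths, mem_singleton]
  exact ⟨IsPath.eq_singleton hG, fun h => h ▸ IsPath.singleton hu⟩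

theorem sum_paths_eq_sum_parents {M : Type*} [AddCommMonoid M]
    (hPaths : ∀ r Ξ, Ξ ∈ Paths r ↔ IsPath 𝓡 PA u r Ξ) (hv : v ∈ 𝓡) (hvu : v ≠ u)
    (f : List (Pat d) → M) :
    ∑ Ξ ∈ Paths v, f Ξ = ∑ s ∈ PA v, ∑ Ξ ∈ Paths s, f (Ξ ++ [v]) := by
  rw [sum_sigma']
  symm
  refine sum_bij (fun x _ => x.2 ++ [v]) ?_ ?_ ?_ (fun _ _ => rfl)
  · rintro ⟨s, Ξ⟩ hx
    rw [mem_sigma] at hx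
    exact (hPaths _ _).2 (((hPaths _ _).1 hx.2).append_singleton hx.1 hv)
  · rintro ⟨s, Ξ⟩ hx ⟨s', Ξ'⟩ hx' h
    rw [mem_sigma, hPaths] at hx hx'
    obtain rfl : Ξ = Ξ' := List.append_cancel_right h
    obtain rfl : s = s' := Option.some_inj.1 (hx.2.2.2.1.symm.trans hx'.2.2.2.1)
    rfl
  · intro Ξ hΞ
    obtain ⟨Ξ', s, rfl, hs, hp⟩ := ((hPaths _ _).1 hΞ).exists_eq_append_singleton hvu
    exact ⟨⟨s, Ξ'⟩, mem_sigma.2 ⟨hs, (hPaths _ _).2 hp⟩, rfl⟩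

theorem eq_sum_paths_of_parent_recursion {R : Type*} [CommSemiring R]
    (hG : IsRegularGraph 𝓡 PA) (h𝓡 : allOnes d ∈ 𝓡)
    (hPaths : ∀ r Ξ, Ξ ∈ Paths r ↔ IsPath 𝓡 PA (allOnes d) r Ξ) {g w : Pat d → R}
    (hrec : ∀ r ∈ 𝓡, r ≠ allOnes d → g r = (∑ s ∈ PA r, g s) * w r) (r : Pat d)
    (hr : r ∈ 𝓡) : g r = ∑ Ξ ∈ Paths r, g (allOnes d) * pathWeight w Ξ := by
  induction r using WellFoundedGT.induction with
  | _ r ih =>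
  by_cases hr1 : r = allOnes d
  · subst hr1
    rw [paths_self_eq_singleton hG h𝓡 hPaths, sum_singleton, pathWeight_singleton_allOnes,
      mul_one]
  obtain ⟨-, hsub, hlt⟩ := hG.2 r hr hr1
  rw [hrec r hr hr1, sum_paths_eq_sum_parents hPaths hr hr1, sum_mul]
  refine sum_congr rfl fun s hs => ?_
  rw [ih s (hlt s hs) (hsub hs), sum_mul]
  refine sum_congr rfl fun Ξ _ => ?_
  rw [pathWeight_append_singleton w Ξ hr1, mul_assoc]

end Paths

theorem mean_path_decomposition_general
    (𝓡 : Finset (Pat d)) (h𝓡 : allOnes d ∈ 𝓡)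
    (PA : Pat d → Finset (Pat d)) (hG : IsRegularGraph 𝓡 PA)
    (p : (∀ j, X j) → Pat d → ℝ)
    (hfact : SelOddsFactorizes 𝓡 PA p)
    (θ : (∀ j, X j) → ℝ)
    (Paths : Pat d → Finset (List (Pat d)))
    (hPaths : ∀ r, ∀ Ξ, Ξ ∈ Paths r ↔ IsPath 𝓡 PA (allOnes d) r Ξ) :
    ∑ ℓ : ∀ j, X j, θ ℓ * jointA p ℓ 𝓡
      = ∑ r ∈ 𝓡, ∑ Ξ ∈ Paths r, ∑ ℓ : ∀ j, X j,
          θ ℓ * p ℓ (allOnes d) *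
            (Ξ.map fun s => if s = allOnes d then (1:ℝ) else odds p PA s ℓ).prod := by
  have hpath (r : Pat d) (hr : r ∈ 𝓡) (ℓ : ∀ j, X j) :
      p ℓ r = ∑ Ξ ∈ Paths r, p ℓ (allOnes d) * pathWeight (odds p PA · ℓ) Ξ :=
    eq_sum_paths_of_parent_recursion hG h𝓡 hPaths (fun r hr hr1 => hfact r hr hr1 ℓ) r hr
  calc ∑ ℓ : ∀ j, X j, θ ℓ * jointA p ℓ 𝓡
      = ∑ r ∈ 𝓡, ∑ ℓ : ∀ j, X j, θ ℓ * p ℓ r := by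
        simp only [jointA, mul_sum]
        exact sum_comm
    _ = _ := sum_congr rfl fun r hr => by
        rw [sum_comm]
        refine sum_congr rfl fun ℓ _ => ?_
        simp only [hpath r hr ℓ, mul_sum, mul_assoc]
        rfl

/-- **Path decomposition of the mean.** Under selection-odds factorization w.r.t. a regular
pattern graph, `E[θ(L)] = Σ_{r ∈ 𝓡} Σ_{Ξ ∈ Π_r} θ_Ξ`, where
`θ_Ξ = Σ_ℓ θ(ℓ)·p(ℓ, 1_d)·∏_{s ∈ Ξ, s ≠ 1_d} O_s(ℓ)` (and the trivial path of `1_d`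
contributes `θ_{1_d} = Σ_ℓ θ(ℓ)·p(ℓ, 1_d)`). -/
theorem mean_path_decomposition [∀ j, Nonempty (X j)]
    (𝓡 : Finset (Pat d)) (h𝓡 : allOnes d ∈ 𝓡)
    (PA : Pat d → Finset (Pat d)) (hG : IsRegularGraph 𝓡 PA)
    (p : (∀ j, X j) → Pat d → ℝ)
    (hpmf : IsJointPMF 𝓡 p) (hpos : MargPos 𝓡 p)
    (hfact : SelOddsFactorizes 𝓡 PA p)
    (θ : (∀ j, X j) → ℝ)
    (Paths : Pat d → Finset (List (Pat d)))
    (hPaths : ∀ r, ∀ Ξ, Ξ ∈ Paths r ↔ IsPath 𝓡 PA (allOnes d) r Ξ) :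
    ∑ ℓ : ∀ j, X j, θ ℓ * jointA p ℓ 𝓡
      = ∑ r ∈ 𝓡, ∑ Ξ ∈ Paths r, ∑ ℓ : ∀ j, X j,
          θ ℓ * p ℓ (allOnes d) *
            (Ξ.map fun s => if s = allOnes d then (1:ℝ) else odds p PA s ℓ).prod :=
  mean_path_decomposition_general 𝓡 h𝓡 PA hG p hfact θ Paths hPaths
end
end

section
/- Let G be a tree regular pattern graph on a pattern set 𝓡 (every r ≠ 1_d has a singleton parent set) and let p be a joint pmf satisfying marginal positivity, and fix θ : ((j : Fin d) → X_j) → ℝ. Let r ∈ 𝓡 with r ≠ 1_d and let 1_d = s_0, s_1, …, s_m = r be its unique path in Π_r. Define iterated conditional expectations h_0 = θ and, for k = 1, …, m, h_k(ℓ) = (Σ_{ℓ' ~_{s_k} ℓ} h_{k−1}(ℓ') · p(ℓ', s_{k−1})) / p_{s_k}(ℓ, s_{k−1}) (the conditional expectation E[h_{k−1}(L) | L_{s_k} = ℓ_{s_k}, R = s_{k−1}]). Then for every ℓ, the path regression function equals the iterated conditional expectation: μ_{Ξ,r}(ℓ) = h_m(ℓ), where Ξ is the unique path from 1_d to r. 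-/
open Finset

noncomputable section

variable {d : ℕ}


variable {X : Fin d → Type*} [∀ j, Fintype (X j)] [∀ j, DecidableEq (X j)]

/-!
Along the path `1_d = s_0, s_1, …, s_m = r` the patterns decrease, so every `s_{k+1}`-class of
full-data values is a union of `s_k`-classes. Regrouping the sum that defines `h_{k+1}` class by
class (the tower property) shows by induction that
`h_k(ℓ) = (Σ_{ℓ' ~_{s_k} ℓ} θ(ℓ') p(ℓ', 1_d) ∏_{0 < i < k} ρ_i(ℓ')) / p_{s_k}(ℓ, s_{k-1})`
with `ρ_i = p_{s_i}(·, s_i) / p_{s_i}(·, s_{i-1})`. In a tree graph `PA(s_i) = {s_{i-1}}`, so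
`ρ_i` is the selection odds `O_{s_i}`, and for `k = m` the right-hand side is `μ_{Ξ,r}(ℓ)`.
-/

section Agree

variable {Y : Fin d → Type*} {r s : Pat d} {a b c : ∀ j, Y j}

theorem agree.symm (h : agree r a b) : agree r b a := fun j hj => (h j hj).symm

theorem agree.trans (hab : agree r a b) (hbc : agree r b c) : agree r a c :=
  fun j hj => (hab j hj).trans (hbc j hj)

theorem agree.mono (hrs : r ≤ s) (h : agree s a b) : agree r a b :=
  fun j hj => h j (le_antisymm (Bool.le_true _) (hj ▸ hrs j))

end Agree

def sumAgree (r : Pat d) (f : (∀ j, X j) → ℝ) (ℓ : ∀ j, X j) : ℝ :=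
  ∑ ℓ' ∈ univ.filter (fun ℓ' => agree r ℓ ℓ'), f ℓ'

section SumAgree

variable {r s t : Pat d}

theorem sumAgree_congr {a b : ∀ j, X j} (h : agree r a b) (f : (∀ j, X j) → ℝ) :
    sumAgree r f a = sumAgree r f b := by
  unfold sumAgree
  congr 1
  ext c
  simpa using ⟨h.symm.trans, h.trans⟩

theorem obsP_congr (p : (∀ j, X j) → Pat d → ℝ) {a b : ∀ j, X j} (h : agree r a b)
    (u : Pat d) : obsP p r a u = obsP p r b u :=
  sumAgree_congr h _

/-- For `s ≤ t` the `s`-class of `ℓ` is a union of `t`-classes. -/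
theorem sumAgree_sumAgree_comm (hst : s ≤ t) (F : (∀ j, X j) → (∀ j, X j) → ℝ)
    (ℓ : ∀ j, X j) :
    sumAgree s (fun b => sumAgree t (fun a => F a b) b) ℓ =
      sumAgree s (fun a => sumAgree t (F a) a) ℓ := by
  refine sum_comm' fun b a => ?_
  simp only [mem_filter, mem_univ, true_and]
  exact ⟨fun ⟨hb, hba⟩ => ⟨hba.symm, hb.trans (hba.mono hst)⟩,
    fun ⟨hab, ha⟩ => ⟨ha.trans (hab.mono hst), hab.symm⟩⟩

/-- The tower property
`E[E[W | L_t, R = u] · 1{R = t} | L_s] = E[W · p_t(L, t) / p_t(L, u) | L_s]` for `s ≤ t`,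
without normalizing constants. -/
theorem sumAgree_condExp_mul (p : (∀ j, X j) → Pat d → ℝ) (hst : s ≤ t) (u : Pat d)
    (w : (∀ j, X j) → ℝ) (ℓ : ∀ j, X j) :
    sumAgree s (fun b => sumAgree t w b / obsP p t b u * p b t) ℓ =
      sumAgree s (fun a => w a * (obsP p t a t / obsP p t a u)) ℓ := by
  have hinner : ∀ b, sumAgree t w b / obsP p t b u * p b t =
      sumAgree t (fun a => w a / obsP p t a u * p b t) b := fun b => by
    simp only [sumAgree, sum_div, sum_mul]
    refine sum_congr rfl fun a ha => ?_
    rw [obsP_congr p (mem_filter.1 ha).2 u]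
  simp only [hinner]
  rw [sumAgree_sumAgree_comm hst]
  refine sum_congr rfl fun a _ => ?_
  simp only [sumAgree, ← mul_sum]
  change w a / obsP p t a u * obsP p t a t = _
  ring

theorem iterCondExp_eq_sumAgree_prod (p : (∀ j, X j) → Pat d → ℝ) (s : ℕ → Pat d)
    (n : ℕ) (hs : ∀ k, k + 1 < n → s (k + 1) ≤ s k) (h : ℕ → (∀ j, X j) → ℝ)
    (hrec : ∀ k, k + 1 < n → ∀ ℓ, h (k + 1) ℓ =
      sumAgree (s (k + 1)) (fun a => h k a * p a (s k)) ℓ / obsP p (s (k + 1)) ℓ (s k)) :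
    ∀ k, k + 1 < n → ∀ ℓ, h (k + 1) ℓ =
      sumAgree (s (k + 1)) (fun a => h 0 a * p a (s 0) *
          ∏ i ∈ range k, obsP p (s (i + 1)) a (s (i + 1)) / obsP p (s (i + 1)) a (s i)) ℓ
        / obsP p (s (k + 1)) ℓ (s k) := by
  intro k
  induction k with
  | zero => simpa using hrec 0
  | succ k ih =>
    intro hk ℓ
    rw [hrec (k + 1) hk, funext fun a => congrArg (· * p a (s (k + 1))) (ih (by omega) a),
      sumAgree_condExp_mul p (hs (k + 1) hk)]
    simp only [prod_range_succ, mul_assoc]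

end SumAgree

theorem odds_of_PA_eq_singleton (p : (∀ j, X j) → Pat d → ℝ)
    {PA : Pat d → Finset (Pat d)} {t u : Pat d} (h : PA t = {u}) (ℓ : ∀ j, X j) :
    odds p PA t ℓ = obsP p t ℓ t / obsP p t ℓ u := by
  rw [odds, obsPA, h, sum_singleton]

theorem List.prod_map_eq_prod_range_getD {α M : Type*} [CommMonoid M] (L : List α)
    (f : α → M) (x : α) : (L.map f).prod = ∏ i ∈ Finset.range L.length, f (L.getD i x) := by
  induction L with
  | nil => simp
  | cons a L ih =>
    rw [List.map_cons, List.prod_cons, ih, List.length_cons, Finset.prod_range_succ']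
    simp [mul_comm]

section Graph

variable {𝓡 : Finset (Pat d)} {PA : Pat d → Finset (Pat d)} {r s u v : Pat d}
  {Ξ : List (Pat d)}

theorem IsRegularGraph.ne_allOnes_of_mem_PA (hG : IsRegularGraph 𝓡 PA) (hs : s ∈ PA r) :
    r ≠ allOnes d := by
  rintro rfl
  simp [hG.1] at hs

theorem IsRegularGraph.lt_of_mem_PA (hG : IsRegularGraph 𝓡 PA) (hr : r ∈ 𝓡)
    (hs : s ∈ PA r) : r < s :=
  (hG.2 r hr (hG.ne_allOnes_of_mem_PA hs)).2.2 s hs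

namespace IsPath

theorem getD_zero (hΞ : IsPath 𝓡 PA u v Ξ) (x : Pat d) : Ξ.getD 0 x = u := by
  obtain ⟨-, hu, -⟩ := hΞ
  cases Ξ <;> simp_all

theorem getD_length_sub_one (hΞ : IsPath 𝓡 PA u v Ξ) (x : Pat d) :
    Ξ.getD (Ξ.length - 1) x = v := by
  obtain ⟨-, -, hv, -⟩ := hΞ
  rw [List.getLast?_eq_getElem?] at hv
  simp [List.getD_eq_getElem?_getD, hv]

theorem two_le_length (hΞ : IsPath 𝓡 PA u v Ξ) (huv : u ≠ v) : 2 ≤ Ξ.length := by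
  have hpos : 0 < Ξ.length := List.length_pos_iff.2 hΞ.1
  by_contra hlt
  apply huv
  rw [← hΞ.getD_zero u, ← hΞ.getD_length_sub_one u, show Ξ.length - 1 = 0 by omega]

theorem getD_mem_PA (hΞ : IsPath 𝓡 PA u v Ξ) {i : ℕ} (hi : i + 1 < Ξ.length) (x : Pat d) :
    Ξ.getD i x ∈ PA (Ξ.getD (i + 1) x) := by
  rw [List.getD_eq_getElem (n := i) _ _ (by omega), List.getD_eq_getElem _ _ hi]
  exact List.isChain_iff_getElem.1 hΞ.2.2.2.2 i hi

theorem getD_lt_getD (hG : IsRegularGraph 𝓡 PA) (hΞ : IsPath 𝓡 PA u v Ξ) {i j : ℕ}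
    (hij : i < j) (hj : j < Ξ.length) (x : Pat d) : Ξ.getD j x < Ξ.getD i x := by
  have hdec : Ξ.IsChain (fun a b => b < a) :=
    hΞ.2.2.2.2.imp_of_mem_imp fun _ b _ hb hab => hG.lt_of_mem_PA (hΞ.2.2.2.1 b hb) hab
  rw [List.getD_eq_getElem _ _ hj, List.getD_eq_getElem _ _ (by omega)]
  exact List.pairwise_iff_getElem.1 hdec.pairwise i j _ _ hij

theorem PA_getD_succ (hG : IsRegularGraph 𝓡 PA)
    (hTree : ∀ r ∈ 𝓡, r ≠ allOnes d → ∃ s, PA r = {s}) (hΞ : IsPath 𝓡 PA u v Ξ) {i : ℕ}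
    (hi : i + 1 < Ξ.length) (x : Pat d) : PA (Ξ.getD (i + 1) x) = {Ξ.getD i x} := by
  have hmem := hΞ.getD_mem_PA hi x
  have hR : Ξ.getD (i + 1) x ∈ 𝓡 := by
    rw [List.getD_eq_getElem _ _ hi]
    exact hΞ.2.2.2.1 _ (List.getElem_mem hi)
  obtain ⟨t, ht⟩ := hTree _ hR (hG.ne_allOnes_of_mem_PA hmem)
  rw [ht, mem_singleton] at hmem
  rw [ht, hmem]

/-- On a path from `1_d` to `r` the condition `r < τ ≠ 1_d` singles out the interior positions
`1, …, m - 1`. -/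
theorem prod_map_ite_eq_prod_range {M : Type*} [CommMonoid M] (hG : IsRegularGraph 𝓡 PA)
    (hΞ : IsPath 𝓡 PA (allOnes d) r Ξ) (hr : r ≠ allOnes d) (f : Pat d → M) :
    (Ξ.map fun τ => if r < τ ∧ τ ≠ allOnes d then f τ else 1).prod =
      ∏ i ∈ range (Ξ.length - 2), f (Ξ.getD (i + 1) (allOnes d)) := by
  have hn := hΞ.two_le_length hr.symm
  obtain ⟨m, hm⟩ : ∃ m, Ξ.length = m + 2 := ⟨Ξ.length - 2, by omega⟩
  have hlast := hΞ.getD_length_sub_one (allOnes d)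
  rw [List.prod_map_eq_prod_range_getD _ _ (allOnes d), hm, prod_range_succ, prod_range_succ']
  rw [hm] at hlast
  simp only [hΞ.getD_zero, show m + 2 - 2 = m by omega, show m + 1 = m + 2 - 1 by omega, hlast,
    lt_irrefl, false_and, ne_eq, not_true_eq_false, and_false, if_false, mul_one]
  refine prod_congr rfl fun i hi => if_pos ⟨?_, ?_⟩
  · rw [← hlast]
    exact hΞ.getD_lt_getD hG (by simp at hi; omega) (by omega) _
  · exact hG.ne_allOnes_of_mem_PA (hΞ.getD_mem_PA (by simp at hi; omega) _)

end IsPath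

end Graph

theorem tree_graph_iterated_conditional_expectation_general
    (𝓡 : Finset (Pat d))
    (PA : Pat d → Finset (Pat d)) (hG : IsRegularGraph 𝓡 PA)
    (hTree : ∀ r ∈ 𝓡, r ≠ allOnes d → ∃ s, PA r = {s})
    (p : (∀ j, X j) → Pat d → ℝ)
    (θ : (∀ j, X j) → ℝ)
    (r : Pat d) (hr1 : r ≠ allOnes d)
    (Ξ : List (Pat d)) (hΞ : IsPath 𝓡 PA (allOnes d) r Ξ)
    (h : ℕ → (∀ j, X j) → ℝ)
    (hh0 : h 0 = θ)
    (hhk : ∀ k, k + 1 < Ξ.length → ∀ ℓ, h (k + 1) ℓ =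
      (∑ ℓ' ∈ univ.filter (fun ℓ' => agree (Ξ.getD (k + 1) (allOnes d)) ℓ ℓ'),
          h k ℓ' * p ℓ' (Ξ.getD k (allOnes d)))
        / obsP p (Ξ.getD (k + 1) (allOnes d)) ℓ (Ξ.getD k (allOnes d))) :
    ∀ ℓ, (∑ ℓ' ∈ univ.filter (fun ℓ' => agree r ℓ ℓ'),
        θ ℓ' * p ℓ' (allOnes d) *
          (Ξ.map fun τ => if r < τ ∧ τ ≠ allOnes d then odds p PA τ ℓ' else 1).prod)
      / obsPA p r ℓ (PA r) = h (Ξ.length - 1) ℓ := by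
  intro ℓ
  have hn := hΞ.two_le_length hr1.symm
  have hm : Ξ.length - 2 + 1 = Ξ.length - 1 := by omega
  have hclosed := iterCondExp_eq_sumAgree_prod p (Ξ.getD · (allOnes d)) Ξ.length
    (fun k hk => (hΞ.getD_lt_getD hG k.lt_succ_self hk _).le) h hhk (Ξ.length - 2) (by omega) ℓ
  have hPA := hΞ.PA_getD_succ hG hTree (i := Ξ.length - 2) (by omega) (allOnes d)
  rw [hm, hΞ.getD_length_sub_one] at hclosed hPA
  rw [hclosed, hΞ.getD_zero, hh0, obsPA, hPA, sum_singleton]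
  congr 1
  refine sum_congr rfl fun a _ => ?_
  rw [hΞ.prod_map_ite_eq_prod_range hG hr1]
  exact congrArg _ (prod_congr rfl fun i hi =>
    odds_of_PA_eq_singleton p (hΞ.PA_getD_succ hG hTree (by simp at hi; omega) _) a)

/-- **Tree graphs (Appendix: closed-form regression functions).** In a tree regular pattern
graph, along the unique path `1_d = s_0, s_1, …, s_m = r`, the path regression function
`μ_{Ξ,r}` is the iterated conditional expectation
`E[E[⋯E[θ(L)|L_{s_1}, R = s_0]⋯ |L_{s_{m-1}}, R = s_{m-2}] | L_{s_m}, R = s_{m-1}]`. -/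
theorem tree_graph_iterated_conditional_expectation [∀ j, Nonempty (X j)]
    (𝓡 : Finset (Pat d)) (h𝓡 : allOnes d ∈ 𝓡)
    (PA : Pat d → Finset (Pat d)) (hG : IsRegularGraph 𝓡 PA)
    (hTree : ∀ r ∈ 𝓡, r ≠ allOnes d → ∃ s, PA r = {s})
    (p : (∀ j, X j) → Pat d → ℝ)
    (hpmf : IsJointPMF 𝓡 p) (hpos : MargPos 𝓡 p)
    (θ : (∀ j, X j) → ℝ)
    (r : Pat d) (hr : r ∈ 𝓡) (hr1 : r ≠ allOnes d)
    (Ξ : List (Pat d)) (hΞ : IsPath 𝓡 PA (allOnes d) r Ξ)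
    (h : ℕ → (∀ j, X j) → ℝ)
    (hh0 : h 0 = θ)
    (hhk : ∀ k, k + 1 < Ξ.length → ∀ ℓ, h (k + 1) ℓ =
      (∑ ℓ' ∈ univ.filter (fun ℓ' => agree (Ξ.getD (k + 1) (allOnes d)) ℓ ℓ'),
          h k ℓ' * p ℓ' (Ξ.getD k (allOnes d)))
        / obsP p (Ξ.getD (k + 1) (allOnes d)) ℓ (Ξ.getD k (allOnes d))) :
    ∀ ℓ, (∑ ℓ' ∈ univ.filter (fun ℓ' => agree r ℓ ℓ'),
        θ ℓ' * p ℓ' (allOnes d) *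
          (Ξ.map fun τ => if r < τ ∧ τ ≠ allOnes d then odds p PA τ ℓ' else 1).prod)
      / obsPA p r ℓ (PA r) = h (Ξ.length - 1) ℓ :=
  tree_graph_iterated_conditional_expectation_general 𝓡 PA hG hTree p θ r hr1 Ξ hΞ h hh0 hhk
end
end
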